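/- Let 0 < α and β ≥ 2α, let μ : ℝ → ℝ be continuous and nonnegative, let φ : [0,∞) → ℝ be locally integrable, and let b : [0,∞)×[0,∞) → ℝ be continuous with b(a,t) = 0 for a ∉ [α,β]. Set π(a) = exp(−∫₀^a μ(s) ds), b̄(a,t) = b(a,t)·π(a), φ̄(a) = φ(a)/π(a). Define B on [0,2α] by: B(t) = ∫_α^β b̄(c,t)·φ̄(c−t) dc for t ∈ [0,α], and B(t) = ∫_α^t b̄(c,t)·B₁(t−c) dc + ∫_t^β b̄(c,t)·φ̄(c−t) dc for t ∈ [α,2α], where B₁(u) = ∫_α^β b̄(c,u)·φ̄(c−u) dc. Then B satisfies the Lotka renewal integral equation B(t) = ∫₀^t b̄(a,t)·B(t−a) da + ∫_t^∞ b̄(a,t)·φ̄(a−t) da for every t ∈ [0,2α]. -/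
import Mathlib


open MeasureTheory Real Set

/-- Theorem 3.4 a,b: the explicitly constructed function `B` on
`[0,2α]` (given by `B(t) = ∫_α^β b̄(c,t)·φ̄(c−t) dc` on `[0,α]` and by
`B(t) = ∫_α^t b̄(c,t)·B₁(t−c) dc + ∫_t^β b̄(c,t)·φ̄(c−t) dc` on `[α,2α]`)
satisfies the Lotka renewal integral equation
`B(t) = ∫₀^t b̄(a,t)·B(t−a) da + ∫_t^∞ b̄(a,t)·φ̄(a−t) da` on `[0,2α]`. -/
theorem lotka_renewal_equation_first_two_intervals
    (α β : ℝ) (hα : 0 < α) (hβ : 2 * α ≤ β)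
    (μ : ℝ → ℝ) (hμc : Continuous μ) (hμ0 : ∀ x, 0 ≤ μ x)
    (φ : ℝ → ℝ) (hφ : MeasureTheory.LocallyIntegrableOn φ (Set.Ici 0) volume)
    (b : ℝ → ℝ → ℝ) (hbc : Continuous fun p : ℝ × ℝ => b p.1 p.2)
    (hbsupp : ∀ a t, 0 ≤ t → a ∉ Set.Icc α β → b a t = 0)
    (pi : ℝ → ℝ) (hpi : ∀ a, pi a = Real.exp (-(∫ s in (0:ℝ)..a, μ s)))
    (bbar : ℝ → ℝ → ℝ) (hbbar : ∀ a t, bbar a t = b a t * pi a)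
    (φbar : ℝ → ℝ) (hφbar : ∀ a, φbar a = φ a / pi a)
    (B₁ : ℝ → ℝ) (hB₁ : ∀ u, B₁ u = ∫ c in α..β, bbar c u * φbar (c - u))
    (B : ℝ → ℝ)
    (hBa : ∀ t ∈ Set.Icc (0:ℝ) α, B t = ∫ c in α..β, bbar c t * φbar (c - t))
    (hBb : ∀ t ∈ Set.Icc α (2 * α),
      B t = (∫ c in α..t, bbar c t * B₁ (t - c)) +
        ∫ c in t..β, bbar c t * φbar (c - t)) :
    ∀ t ∈ Set.Icc (0:ℝ) (2 * α),
      B t = (∫ a in (0:ℝ)..t, bbar a t * B (t - a)) +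
        ∫ a in Set.Ici t, bbar a t * φbar (a - t) := by
  intro t ht
  obtain ⟨ht0, ht2⟩ := ht
  have hbb : ∀ a, a ∉ Set.Icc α β → bbar a t = 0 := fun a ha => by
    rw [hbbar, hbsupp a t ht0 ha, zero_mul]
  have hne : ∀ᵐ x : ℝ, x ≠ α := by
    rw [MeasureTheory.ae_iff]
    simp only [not_not]
    simpa using measure_singleton (α : ℝ)
  rcases le_or_gt t α with ht1 | ht1
  · rw [hBa t ⟨ht0, ht1⟩]
    have h1 : (∫ a in (0:ℝ)..t, bbar a t * B (t - a)) = 0 := by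
      rw [intervalIntegral.integral_of_le ht0,
        ← MeasureTheory.Measure.restrict_congr_set MeasureTheory.Ioo_ae_eq_Ioc]
      refine MeasureTheory.setIntegral_eq_zero_of_forall_eq_zero fun a ha => ?_
      rw [hbb a (fun h => absurd h.1 (not_le.2 (lt_of_lt_of_le ha.2 ht1))), zero_mul]
    have h2 : (∫ a in Set.Ici t, bbar a t * φbar (a - t))
        = ∫ c in α..β, bbar c t * φbar (c - t) := by
      rw [MeasureTheory.setIntegral_eq_of_subset_of_ae_diff_eq_zero
        measurableSet_Ici.nullMeasurableSet
        (show Set.Icc α β ⊆ Set.Ici t from fun x hx => le_trans ht1 hx.1)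
        (Filter.Eventually.of_forall fun x hx => by rw [hbb x hx.2, zero_mul]),
        ← MeasureTheory.Measure.restrict_congr_set MeasureTheory.Ioc_ae_eq_Icc,
        intervalIntegral.integral_of_le (by linarith : α ≤ β)]
    rw [h1, h2, zero_add]
  · rw [hBb t ⟨ht1.le, ht2⟩]
    have h1 : (∫ a in (0:ℝ)..t, bbar a t * B (t - a))
        = ∫ c in α..t, bbar c t * B₁ (t - c) := by
      rw [intervalIntegral.integral_of_le ht0, intervalIntegral.integral_of_le ht1.le]
      rw [MeasureTheory.setIntegral_eq_of_subset_of_ae_diff_eq_zero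
        measurableSet_Ioc.nullMeasurableSet
        (Set.Ioc_subset_Ioc_left hα.le) ?_]
      · refine MeasureTheory.setIntegral_congr_fun measurableSet_Ioc fun a ha => ?_
        rw [hBa (t - a) ⟨by linarith [ha.2], by linarith [ha.1]⟩, hB₁]
      · filter_upwards [hne] with x hx hmem
        have hxα : x < α := by
          rcases hmem with ⟨⟨hx0, hxt⟩, hnot⟩
          by_contra h
          exact hnot ⟨lt_of_le_of_ne (not_lt.1 h) (Ne.symm hx), hxt⟩
        rw [hbb x (fun h => absurd h.1 (not_le.2 hxα)), zero_mul]
    have h2 : (∫ a in Set.Ici t, bbar a t * φbar (a - t))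
        = ∫ c in t..β, bbar c t * φbar (c - t) := by
      rw [MeasureTheory.setIntegral_eq_of_subset_of_ae_diff_eq_zero
        measurableSet_Ici.nullMeasurableSet
        (Set.Icc_subset_Ici_self : Set.Icc t β ⊆ Set.Ici t)
        (Filter.Eventually.of_forall fun x hx => ?_),
        ← MeasureTheory.Measure.restrict_congr_set MeasureTheory.Ioc_ae_eq_Icc,
        intervalIntegral.integral_of_le (le_trans ht2 hβ)]
      rcases hx with ⟨hxt, hnot⟩
      have hxβ : β < x := by
        by_contra h
        exact hnot ⟨hxt, not_lt.1 h⟩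
      rw [hbb x (fun h => absurd h.2 (not_le.2 hxβ)), zero_mul]
    rw [h1, h2]
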